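/- B is signable if and only if Γ_D is bipartite and every prime pair (i,j) of D is signable. -/

import Mathlib

/-!
Write `N = B - 1` and encode the paths of `D` by the polynomials `Pᵢⱼ = ∑ₘ (Nᵐ)ᵢⱼ Xᵐ`. Since
`P = 1 + X N P`, evaluating at `-1` gives `B⁻¹ᵢⱼ = Pᵢⱼ(-1)`, and nonnegativity of `N` makes
`deg Pᵢⱼ = ℓ(i,j)`. Hence `⟨i,j⟩ B⁻¹ᵢⱼ = (-1)^(deg Pᵢⱼ) Pᵢⱼ(-1)`, which is multiplicative in `Pᵢⱼ`.

A signing `s` must have `sᵢ sⱼ = -1` on the edges of `Γ_D`, where `B⁻¹ᵢⱼ = -Bᵢⱼ < 0`. Every edge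
of a longest path lies in `Γ_D`, so then `sᵢ sⱼ = ⟨i,j⟩` on every nonzero pair, and `s` signs `B⁻¹`
exactly when `⟨i,j⟩ B⁻¹ᵢⱼ ≥ 0` for all pairs. This reduces to prime pairs by induction on `j - i`:
on unit pairs `⟨i,j⟩ B⁻¹ᵢⱼ = Bᵢⱼ`, and if `v` meets every path from `i` to `j` then
`Pᵢⱼ = Pᵢᵥ Pᵥⱼ`.
-/

open Matrix

/-- A square integer matrix `M` is *signable* if there is a signing vector `s`
(valued in `{+1, -1}`) with `s i * M i j * s j = |M i j|` for all `i, j`. -/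
def IsSignable {k : ℕ} (M : Matrix (Fin k) (Fin k) ℤ) : Prop :=
  ∃ s : Fin k → ℤ, (∀ i, s i = 1 ∨ s i = -1) ∧ ∀ i j, s i * M i j * s j = |M i j|

/-- `{i, j}` is an edge of the maximal-path subgraph `Γ_D` of the digraph `D` with
adjacency matrix `B - 1`: there is an edge from `i` to `j` and no directed path
of length `≥ 2` from `i` to `j`. -/
def GammaEdge {k : ℕ} (B : Matrix (Fin k) (Fin k) ℤ) (i j : Fin k) : Prop :=
  i < j ∧ 1 ≤ B i j ∧ ∀ m : ℕ, 2 ≤ m → ((B - 1) ^ m) i j = 0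

/-- The maximal-path subgraph `Γ_D` is bipartite. -/
def GammaBipartite {k : ℕ} (B : Matrix (Fin k) (Fin k) ℤ) : Prop :=
  ∃ c : Fin k → Bool, ∀ i j : Fin k, GammaEdge B i j → c i ≠ c j

open Classical in
/-- The pairing `⟨i,j⟩`: it is `1` on the diagonal, `(-1)^ℓ(i,j)` where `ℓ(i,j)` is the
length of a longest directed path from `i` to `j` when such a path exists, and `0`
otherwise. -/
noncomputable def pairing {k : ℕ} (B : Matrix (Fin k) (Fin k) ℤ) (i j : Fin k) : ℤ :=
  if i = j then 1
  else if ∃ m : ℕ, 1 ≤ m ∧ ((B - 1) ^ m) i j ≠ 0 then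
    (-1 : ℤ) ^ sSup {m : ℕ | 1 ≤ m ∧ ((B - 1) ^ m) i j ≠ 0}
  else 0

/-- `B⁽ᵛ⁾`: the matrix obtained from `B` by replacing every off-diagonal entry in row
`v` and in column `v` by `0` (deleting the vertex `v` from the digraph). -/
def vertexDelete {k : ℕ} (B : Matrix (Fin k) (Fin k) ℤ) (v : Fin k) :
    Matrix (Fin k) (Fin k) ℤ :=
  Matrix.of fun i j => if i ≠ j ∧ (i = v ∨ j = v) then 0 else B i j

/-- `(i,j)` is a zero pair: no directed path from `i` to `j`. -/
def ZeroPair {k : ℕ} (B : Matrix (Fin k) (Fin k) ℤ) (i j : Fin k) : Prop :=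
  ∀ m : ℕ, 1 ≤ m → ((B - 1) ^ m) i j = 0

/-- `(i,j)` is a unit pair: all directed paths from `i` to `j` have length one. -/
def UnitPair {k : ℕ} (B : Matrix (Fin k) (Fin k) ℤ) (i j : Fin k) : Prop :=
  1 ≤ B i j ∧ ∀ m : ℕ, 2 ≤ m → ((B - 1) ^ m) i j = 0

/-- `(i,j)` is a composite pair: every directed path from `i` to `j` passes through
some fixed intermediate vertex `v`. -/
def CompositePair {k : ℕ} (B : Matrix (Fin k) (Fin k) ℤ) (i j : Fin k) : Prop :=
  ∃ v : Fin k, i < v ∧ v < j ∧ ∀ m : ℕ, 1 ≤ m → ((vertexDelete B v - 1) ^ m) i j = 0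

/-- `(i,j)` is a prime pair: `i < j` and `(i,j)` is neither a zero pair, a unit pair,
nor a composite pair. -/
def PrimePair {k : ℕ} (B : Matrix (Fin k) (Fin k) ℤ) (i j : Fin k) : Prop :=
  i < j ∧ ¬ZeroPair B i j ∧ ¬UnitPair B i j ∧ ¬CompositePair B i j

open Polynomial Finset

namespace Matrix

theorem exists_apply_ne_zero_of_pow_add_apply_ne_zero {ι R : Type*} [Fintype ι] [DecidableEq ι]
    [Semiring R] {M : Matrix ι ι R} {a b : ℕ} {i j : ι} (h : (M ^ (a + b)) i j ≠ 0) :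
    ∃ k, (M ^ a) i k ≠ 0 ∧ (M ^ b) k j ≠ 0 := by
  rw [pow_add, mul_apply] at h
  obtain ⟨k, -, hk⟩ := exists_ne_zero_of_sum_ne_zero h
  exact ⟨k, left_ne_zero_of_mul hk, right_ne_zero_of_mul hk⟩

theorem pow_add_apply_ne_zero {ι : Type*} [Fintype ι] [DecidableEq ι] {M : Matrix ι ι ℤ}
    (hM : ∀ i j, 0 ≤ M i j) {a b : ℕ} {i k j : ι} (hik : (M ^ a) i k ≠ 0)
    (hkj : (M ^ b) k j ≠ 0) : (M ^ (a + b)) i j ≠ 0 := by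
  have hpos : 0 < (M ^ a) i k * (M ^ b) k j :=
    mul_pos ((pow_apply_nonneg hM a i k).lt_of_ne' hik) ((pow_apply_nonneg hM b k j).lt_of_ne' hkj)
  rw [pow_add, mul_apply]
  refine (hpos.trans_le (single_le_sum (f := fun l => (M ^ a) i l * (M ^ b) l j)
    (fun l _ => mul_nonneg (pow_apply_nonneg hM a i l) (pow_apply_nonneg hM b l j))
    (mem_univ k))).ne'

section PathPoly

variable {n : ℕ} {R : Type*} [CommRing R] {N : Matrix (Fin n) (Fin n) R}

-- For strictly upper triangular `N` the truncation at `n` loses nothing; if moreover `N ≥ 0`,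
-- the `natDegree` is the length of a longest path from `i` to `j`.
noncomputable def pathPoly (N : Matrix (Fin n) (Fin n) R) (i j : Fin n) : R[X] :=
  ∑ m ∈ range n, monomial m ((N ^ m) i j)

variable (hN : ∀ i j, j ≤ i → N i j = 0)
include hN

theorem pow_apply_eq_zero_of_lt {m : ℕ} {i j : Fin n} (h : (j : ℕ) < i + m) :
    (N ^ m) i j = 0 := by
  induction m generalizing j with
  | zero => exact one_apply_ne (by rintro rfl; omega)
  | succ m ih =>
    rw [pow_succ, mul_apply]
    refine sum_eq_zero fun k _ => ?_
    by_cases hk : (k : ℕ) < i + m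
    · rw [ih hk, zero_mul]
    · rw [hN k j (Fin.le_def.2 (by omega)), mul_zero]

theorem pow_eq_zero_of_le {m : ℕ} (hm : n ≤ m) : N ^ m = 0 := by
  ext i j
  exact pow_apply_eq_zero_of_lt hN (by omega)

theorem coeff_pathPoly (i j : Fin n) (m : ℕ) : (pathPoly N i j).coeff m = (N ^ m) i j := by
  simp only [pathPoly, finsetSum_coeff, coeff_monomial, sum_ite_eq', mem_range]
  split_ifs with hm
  · rfl
  · rw [pow_eq_zero_of_le hN (not_lt.1 hm), zero_apply]

theorem pathPoly_self (i : Fin n) : pathPoly N i i = 1 := by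
  ext m
  rw [coeff_pathPoly hN, coeff_one]
  rcases m with _ | m
  · simp
  · simp [pow_apply_eq_zero_of_lt hN (i := i) (j := i) (m := m + 1) (by omega)]

theorem pathPoly_eq_zero_of_lt {i j : Fin n} (h : j < i) : pathPoly N i j = 0 := by
  ext m
  rw [coeff_pathPoly hN, coeff_zero, pow_apply_eq_zero_of_lt hN (by omega)]

theorem pathPoly_eq_C_add_X_mul (i j : Fin n) :
    pathPoly N i j =
      C ((1 : Matrix (Fin n) (Fin n) R) i j) + X * ∑ k, C (N i k) * pathPoly N k j := by
  ext m
  rcases m with _ | m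
  · simp [coeff_pathPoly hN]
  · simp [coeff_pathPoly hN, coeff_X_mul, finsetSum_coeff, pow_succ', mul_apply]

theorem inv_one_add_apply (i j : Fin n) : (1 + N)⁻¹ i j = (pathPoly N i j).eval (-1) := by
  suffices (1 + N) * of (fun i j => (pathPoly N i j).eval (-1)) = 1 by
    rw [inv_eq_right_inv this, of_apply]
  ext i j
  have h := congrArg (eval (-1)) (pathPoly_eq_C_add_X_mul hN i j)
  simp only [eval_add, eval_C, eval_mul, eval_X, eval_finsetSum] at h
  rw [add_mul, Matrix.one_mul, add_apply, mul_apply]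
  simp only [of_apply]
  linear_combination h

end PathPoly

section Nonneg

variable {n : ℕ} {N : Matrix (Fin n) (Fin n) ℤ}

-- `v` meets every path from `i` to `j` of `N`, the path of length `0` included (so `i ≠ j`).
def Separates (N : Matrix (Fin n) (Fin n) ℤ) (v i j : Fin n) : Prop :=
  ∀ m, (((N.updateRow v 0).updateCol v 0) ^ m) i j = 0

variable (hN : ∀ i j, j ≤ i → N i j = 0) (hN0 : ∀ i j, 0 ≤ N i j)
include hN hN0

theorem natDegree_add_natDegree_le {i k j : Fin n} (hik : pathPoly N i k ≠ 0)
    (hkj : pathPoly N k j ≠ 0) :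
    (pathPoly N i k).natDegree + (pathPoly N k j).natDegree ≤ (pathPoly N i j).natDegree := by
  refine le_natDegree_of_ne_zero ?_
  rw [coeff_pathPoly hN]
  refine pow_add_apply_ne_zero hN0 (k := k) ?_ ?_ <;>
    rwa [← coeff_pathPoly hN, coeff_natDegree, ne_eq, leadingCoeff_eq_zero]

-- A longest path from `i` to `j` starts with an edge of `Γ` followed by a longest path.
theorem mul_eq_neg_one_pow_natDegree (s : Fin n → ℤ) (hs : ∀ k, s k * s k = 1)
    (hΓ : ∀ i j, (pathPoly N i j).natDegree = 1 → s i * s j = -1) {i j : Fin n}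
    (h : pathPoly N i j ≠ 0) : s i * s j = (-1) ^ (pathPoly N i j).natDegree := by
  have hlead : (N ^ (pathPoly N i j).natDegree) i j ≠ 0 := by
    rwa [← coeff_pathPoly hN, coeff_natDegree, ne_eq, leadingCoeff_eq_zero]
  generalize hL : (pathPoly N i j).natDegree = L at hlead
  induction L generalizing i with
  | zero =>
    obtain rfl : i = j := by
      by_contra hij
      exact hlead (one_apply_ne hij)
    rw [hs, pow_zero]
  | succ L ih =>
    rw [add_comm] at hlead
    obtain ⟨k, hik, hkj⟩ := exists_apply_ne_zero_of_pow_add_apply_ne_zero hlead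
    rw [← coeff_pathPoly hN] at hik hkj
    have hPik : pathPoly N i k ≠ 0 := fun h0 => hik (by rw [h0, coeff_zero])
    have hPkj : pathPoly N k j ≠ 0 := fun h0 => hkj (by rw [h0, coeff_zero])
    have hsum := natDegree_add_natDegree_le hN hN0 hPik hPkj
    have h1 := le_natDegree_of_ne_zero hik
    have h2 := le_natDegree_of_ne_zero hkj
    calc s i * s j = (s i * s k) * (s k * s j) := by linear_combination (-(s i * s j)) * hs k
      _ = -1 * (-1) ^ L := by
        rw [hΓ i k (by omega), ih hPkj (by omega) ?_]
        rwa [← coeff_pathPoly hN]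
      _ = (-1) ^ (L + 1) := by ring

theorem pathPoly_eq_mul_of_separates {v j : Fin n} (i : Fin n) (h : Separates N v i j) :
    pathPoly N i j = pathPoly N i v * pathPoly N v j := by
  induction i using WellFoundedGT.induction with
  | _ i ih =>
  by_cases hiv : i = v
  · rw [hiv, pathPoly_self hN, one_mul]
  have hij : i ≠ j := by
    rintro rfl
    simpa using h 0
  rw [pathPoly_eq_C_add_X_mul hN i j, pathPoly_eq_C_add_X_mul hN i v, one_apply_ne hij,
    one_apply_ne hiv, C_0, zero_add, zero_add, mul_assoc, sum_mul]
  congr 1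
  refine sum_congr rfl fun k _ => ?_
  rw [mul_assoc]
  by_cases hik : N i k = 0
  · rw [hik, C_0, zero_mul, zero_mul]
  by_cases hkv : k = v
  · rw [hkv, pathPoly_self hN, one_mul]
  have hM0 : ∀ a b, 0 ≤ ((N.updateRow v 0).updateCol v 0) a b := by
    intro a b
    simp only [updateCol_apply, updateRow_apply]
    split_ifs <;> simp [hN0]
  have hkj : Separates N v k j := fun m => by
    by_contra hm
    refine pow_add_apply_ne_zero hM0 (k := k) ?_ hm (h (1 + m))
    simpa [updateCol_apply, updateRow_apply, hiv, hkv] using hik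
  rw [ih k (lt_of_not_ge fun hki => hik (hN i k hki)) hkj]

end Nonneg

end Matrix

namespace Polynomial

-- On path polynomials this computes `⟨i,j⟩ · (B⁻¹)ᵢⱼ`.
noncomputable def signedEval (p : ℤ[X]) : ℤ := (-1) ^ p.natDegree * p.eval (-1)

theorem signedEval_mul (p q : ℤ[X]) : signedEval (p * q) = signedEval p * signedEval q := by
  rcases eq_or_ne p 0 with rfl | hp
  · simp [signedEval]
  rcases eq_or_ne q 0 with rfl | hq
  · simp [signedEval]
  rw [signedEval, signedEval, signedEval, natDegree_mul hp hq, pow_add, eval_mul]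
  ring

theorem eval_neg_one_of_natDegree_le_one {R : Type*} [Ring R] {p : R[X]} (hp : p.natDegree ≤ 1)
    (h0 : p.coeff 0 = 0) : p.eval (-1) = -p.coeff 1 := by
  conv_lhs => rw [eq_X_add_C_of_natDegree_le_one hp]
  simp [h0]

end Polynomial

theorem isSignable_iff_exists_sign {k : ℕ} (M : Matrix (Fin k) (Fin k) ℤ) :
    IsSignable M ↔ ∃ s : Fin k → ℤ, (∀ i, s i = 1 ∨ s i = -1) ∧ ∀ i j, 0 ≤ s i * s j * M i j := by
  refine exists_congr fun s => and_congr_right fun hs => forall₂_congr fun i j => ?_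
  rcases hs i with h | h <;> rcases hs j with h' | h' <;>
    simp [h, h', eq_comm (a := M i j), eq_comm (a := -M i j), abs_eq_self, abs_eq_neg_self]

theorem gammaBipartite_iff_exists_sign {k : ℕ} (B : Matrix (Fin k) (Fin k) ℤ) :
    GammaBipartite B ↔
      ∃ s : Fin k → ℤ, (∀ i, s i = 1 ∨ s i = -1) ∧ ∀ i j, GammaEdge B i j → s i * s j = -1 := by
  constructor
  · rintro ⟨c, hc⟩
    refine ⟨fun i => if c i then 1 else -1, fun i => by by_cases c i <;> simp [*], fun i j h => ?_⟩
    have := hc i j h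
    cases hci : c i <;> cases hcj : c j <;> simp_all
  · rintro ⟨s, hs, hsΓ⟩
    refine ⟨fun i => decide (s i = 1), fun i j h => ?_⟩
    have := hsΓ i j h
    rcases hs i with hi | hi <;> rcases hs j with hj | hj <;> simp_all

section Unitriangular

theorem sub_one_apply_eq_zero_of_le {n : ℕ} {B : Matrix (Fin n) (Fin n) ℤ} (h1 : ∀ i, B i i = 1)
    (h2 : ∀ i j : Fin n, j < i → B i j = 0) {i j : Fin n} (hji : j ≤ i) : (B - 1) i j = 0 := by
  rcases hji.lt_or_eq with hji | rfl
  · rw [Matrix.sub_apply, h2 i j hji, one_apply_ne hji.ne', sub_zero]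
  · rw [Matrix.sub_apply, h1, one_apply_eq, sub_self]

theorem sub_one_apply_nonneg {n : ℕ} {B : Matrix (Fin n) (Fin n) ℤ} (h1 : ∀ i, B i i = 1)
    (h2 : ∀ i j : Fin n, j < i → B i j = 0) (h3 : ∀ i j : Fin n, i < j → 0 ≤ B i j)
    (i j : Fin n) : 0 ≤ (B - 1) i j := by
  rcases le_or_gt j i with hji | hij
  · rw [sub_one_apply_eq_zero_of_le h1 h2 hji]
  · rw [Matrix.sub_apply, one_apply_ne hij.ne, sub_zero]
    exact h3 i j hij

variable {n : ℕ} {B : Matrix (Fin n) (Fin n) ℤ} (hN : ∀ i j, j ≤ i → (B - 1) i j = 0)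
include hN

theorem inv_apply_eq_eval_pathPoly (i j : Fin n) :
    B⁻¹ i j = (pathPoly (B - 1) i j).eval (-1) := by
  simpa using inv_one_add_apply hN i j

theorem zeroPair_iff {i j : Fin n} (hij : i ≠ j) :
    ZeroPair B i j ↔ pathPoly (B - 1) i j = 0 := by
  rw [Polynomial.ext_iff]
  simp only [coeff_pathPoly hN, coeff_zero]
  refine ⟨fun h m => ?_, fun h m _ => h m⟩
  rcases m with _ | m
  · exact one_apply_ne hij
  · exact h _ (by omega)

theorem pairing_eq_neg_one_pow {i j : Fin n} (h : pathPoly (B - 1) i j ≠ 0) :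
    pairing B i j = (-1) ^ (pathPoly (B - 1) i j).natDegree := by
  by_cases hij : i = j
  · subst hij
    simp [pairing, pathPoly_self hN]
  have hlead : (pathPoly (B - 1) i j).coeff (pathPoly (B - 1) i j).natDegree ≠ 0 := by
    rwa [coeff_natDegree, ne_eq, leadingCoeff_eq_zero]
  have hpos : 1 ≤ (pathPoly (B - 1) i j).natDegree := by
    by_contra h0
    rw [show (pathPoly (B - 1) i j).natDegree = 0 by omega, coeff_pathPoly hN, pow_zero,
      one_apply_ne hij] at hlead
    exact hlead rfl
  have hmax : IsGreatest {m | 1 ≤ m ∧ ((B - 1) ^ m) i j ≠ 0} (pathPoly (B - 1) i j).natDegree :=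
    ⟨⟨hpos, by rwa [← coeff_pathPoly hN]⟩,
      fun m hm => le_natDegree_of_ne_zero (by rw [coeff_pathPoly hN]; exact hm.2)⟩
  rw [pairing, if_neg hij, if_pos ⟨_, hmax.1⟩, hmax.csSup_eq]

theorem pairing_mul_inv_apply (i j : Fin n) :
    pairing B i j * B⁻¹ i j = signedEval (pathPoly (B - 1) i j) := by
  rw [inv_apply_eq_eval_pathPoly hN]
  by_cases h : pathPoly (B - 1) i j = 0
  · simp [h, signedEval]
  · rw [pairing_eq_neg_one_pow hN h, signedEval]

theorem vertexDelete_sub_one (v : Fin n) :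
    vertexDelete B v - 1 = ((B - 1).updateRow v 0).updateCol v 0 := by
  ext a b
  have hvv := hN v v le_rfl
  rw [Matrix.sub_apply, one_apply_eq] at hvv
  by_cases hab : a = b
  · subst hab
    by_cases hav : a = v
    · subst hav
      simp [vertexDelete, hvv]
    · simp [vertexDelete, hav]
  · simp only [vertexDelete, Matrix.sub_apply, of_apply, updateCol_apply, updateRow_apply,
      one_apply_ne hab]
    split_ifs <;> simp_all

theorem exists_separates_of_compositePair {i j : Fin n} (h : CompositePair B i j) :
    ∃ v, i < v ∧ v < j ∧ Separates (B - 1) v i j := by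
  obtain ⟨v, hiv, hvj, hdel⟩ := h
  refine ⟨v, hiv, hvj, fun m => ?_⟩
  rcases m with _ | m
  · exact one_apply_ne (hiv.trans hvj).ne
  · rw [← vertexDelete_sub_one hN]
    exact hdel _ (by omega)

variable (hN0 : ∀ i j, 0 ≤ (B - 1) i j)
include hN0

theorem unitPair_iff {i j : Fin n} (hij : i ≠ j) :
    UnitPair B i j ↔ (pathPoly (B - 1) i j).natDegree = 1 := by
  have hB : B i j = (pathPoly (B - 1) i j).coeff 1 := by
    rw [coeff_pathPoly hN, pow_one, Matrix.sub_apply, one_apply_ne hij, sub_zero]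
  simp only [UnitPair, hB, ← coeff_pathPoly hN]
  constructor
  · rintro ⟨h1, h2⟩
    exact le_antisymm (natDegree_le_iff_coeff_eq_zero.2 h2) (le_natDegree_of_ne_zero (by omega))
  · intro h
    have hlead : (pathPoly (B - 1) i j).coeff 1 ≠ 0 := by
      rw [← h, coeff_natDegree, ne_eq, leadingCoeff_eq_zero]
      rintro h0
      simp [h0] at h
    have := hN0 i j
    rw [← pow_one (B - 1), ← coeff_pathPoly hN] at this
    exact ⟨by omega, fun m hm => coeff_eq_zero_of_natDegree_lt (by omega)⟩

theorem gammaEdge_iff {i j : Fin n} :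
    GammaEdge B i j ↔ (pathPoly (B - 1) i j).natDegree = 1 := by
  refine ⟨fun h => (unitPair_iff hN hN0 h.1.ne).1 h.2, fun h => ?_⟩
  have hij : (B - 1) i j ≠ 0 := by
    rw [← pow_one (B - 1), ← coeff_pathPoly hN, ← h, coeff_natDegree, ne_eq, leadingCoeff_eq_zero]
    rintro h0
    simp [h0] at h
  have hlt : i < j := lt_of_not_ge fun hji => hij (hN i j hji)
  exact ⟨hlt, (unitPair_iff hN hN0 hlt.ne).2 h⟩

theorem inv_apply_of_gammaEdge {i j : Fin n} (h : GammaEdge B i j) : B⁻¹ i j = -B i j := by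
  rw [inv_apply_eq_eval_pathPoly hN,
    eval_neg_one_of_natDegree_le_one ((gammaEdge_iff hN hN0).1 h).le, coeff_pathPoly hN, pow_one,
    Matrix.sub_apply, one_apply_ne h.1.ne, sub_zero]
  rw [coeff_pathPoly hN, pow_zero, one_apply_ne h.1.ne]

theorem signedEval_pathPoly_nonneg_of_primePair
    (hprime : ∀ i j, PrimePair B i j → 0 ≤ pairing B i j * B⁻¹ i j) (i j : Fin n) :
    0 ≤ signedEval (pathPoly (B - 1) i j) := by
  induction hd : (j : ℕ) - i using Nat.strong_induction_on generalizing i j with | _ d ih =>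
  rcases lt_trichotomy i j with hij | rfl | hji
  · by_cases hz : pathPoly (B - 1) i j = 0
    · simp [hz, signedEval]
    by_cases hu : UnitPair B i j
    · have hΓ : GammaEdge B i j := ⟨hij, hu⟩
      rw [← pairing_mul_inv_apply hN, pairing_eq_neg_one_pow hN hz, (gammaEdge_iff hN hN0).1 hΓ,
        inv_apply_of_gammaEdge hN hN0 hΓ]
      linarith [hu.1]
    by_cases hc : CompositePair B i j
    · obtain ⟨v, hiv, hvj, hsep⟩ := exists_separates_of_compositePair hN hc
      rw [pathPoly_eq_mul_of_separates hN hN0 i hsep, signedEval_mul]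
      have := Fin.lt_def.1 hiv
      have := Fin.lt_def.1 hvj
      exact mul_nonneg (ih _ (by omega) i v rfl) (ih _ (by omega) v j rfl)
    rw [← pairing_mul_inv_apply hN]
    exact hprime i j ⟨hij, (zeroPair_iff hN hij.ne).not.2 hz, hu, hc⟩
  · simp [pathPoly_self hN, signedEval]
  · simp [pathPoly_eq_zero_of_lt hN hji, signedEval]

theorem mul_eq_neg_one_of_gammaEdge {s : Fin n → ℤ} (hs : ∀ k, s k = 1 ∨ s k = -1) {i j : Fin n}
    (h : GammaEdge B i j) (hsB : 0 ≤ s i * s j * B⁻¹ i j) : s i * s j = -1 := by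
  rw [inv_apply_of_gammaEdge hN hN0 h] at hsB
  have := h.2.1
  rcases hs i with hi | hi <;> rcases hs j with hj | hj <;> simp [hi, hj] at hsB ⊢ <;> linarith

theorem mul_mul_inv_apply_eq_pairing_mul {s : Fin n → ℤ} (hs : ∀ k, s k = 1 ∨ s k = -1)
    (hΓ : ∀ i j, GammaEdge B i j → s i * s j = -1) (i j : Fin n) :
    s i * s j * B⁻¹ i j = pairing B i j * B⁻¹ i j := by
  by_cases h : pathPoly (B - 1) i j = 0
  · rw [inv_apply_eq_eval_pathPoly hN, h, eval_zero, mul_zero, mul_zero]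
  have hss : ∀ k, s k * s k = 1 := fun k => by rcases hs k with h | h <;> simp [h]
  rw [pairing_eq_neg_one_pow hN h, mul_eq_neg_one_pow_natDegree hN hN0 s hss
    (fun i j h => hΓ i j ((gammaEdge_iff hN hN0).2 h)) h]

end Unitriangular

theorem stmt11_general {n : ℕ} (B : Matrix (Fin n) (Fin n) ℤ)
    (h1 : ∀ i, B i i = 1) (h2 : ∀ i j : Fin n, j < i → B i j = 0)
    (h3 : ∀ i j : Fin n, i < j → 0 ≤ B i j) :
    IsSignable B⁻¹ ↔
      (GammaBipartite B ∧
        ∀ i j : Fin n, PrimePair B i j → 0 ≤ pairing B i j * B⁻¹ i j) := by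
  have hN := fun i j => sub_one_apply_eq_zero_of_le (i := i) (j := j) h1 h2
  have hN0 := sub_one_apply_nonneg h1 h2 h3
  rw [isSignable_iff_exists_sign, gammaBipartite_iff_exists_sign]
  constructor
  · rintro ⟨s, hs, hsB⟩
    have hΓ : ∀ i j, GammaEdge B i j → s i * s j = -1 := fun i j h =>
      mul_eq_neg_one_of_gammaEdge hN hN0 hs h (hsB i j)
    refine ⟨⟨s, hs, hΓ⟩, fun i j _ => ?_⟩
    rw [← mul_mul_inv_apply_eq_pairing_mul hN hN0 hs hΓ]
    exact hsB i j
  · rintro ⟨⟨s, hs, hΓ⟩, hprime⟩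
    refine ⟨s, hs, fun i j => ?_⟩
    rw [mul_mul_inv_apply_eq_pairing_mul hN hN0 hs hΓ, pairing_mul_inv_apply hN]
    exact signedEval_pathPoly_nonneg_of_primePair hN hN0 hprime i j

/-- `B` is signable iff `Γ_D` is bipartite and every prime pair
`(i,j)` of `D` is signable (`⟨i,j⟩ * (B⁻¹) i j ≥ 0`). -/
theorem stmt11 {n : ℕ} (hn : 1 ≤ n) (B : Matrix (Fin n) (Fin n) ℤ)
    (h1 : ∀ i, B i i = 1) (h2 : ∀ i j : Fin n, j < i → B i j = 0)
    (h3 : ∀ i j : Fin n, i < j → 0 ≤ B i j) :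
    IsSignable B⁻¹ ↔
      (GammaBipartite B ∧
        ∀ i j : Fin n, PrimePair B i j → 0 ≤ pairing B i j * B⁻¹ i j) :=
  stmt11_general B h1 h2 h3
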